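/- arXiv:1005.2862 — 2 statements merged into one kernel-verified Lean document; each statement's English description precedes it below -/
import Mathlib

section
/- For 0 < p < 2, the integral ∫₀^∞ u^{-p/2-1} sin²(u) du equals -2^{p/2-1} cos(πp/4) Γ(-p/2). -/
open Real MeasureTheory Set

lemma aux_exp_int {r : ℝ} (hr : 0 < r) :
    ∫ v in Ioi (0:ℝ), Real.exp (-(r * v)) = 1 / r := by
  have h := Real.integral_rpow_mul_exp_neg_mul_Ioi (a := 1) one_pos hr
  simpa [Real.rpow_one, Real.Gamma_one] using h

lemma aux_int_rpow_exp {c b : ℝ} (hc : -1 < c) (hb : 0 < b) :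
    IntegrableOn (fun t : ℝ => t ^ c * Real.exp (-(b * t))) (Ioi 0) := by
  have h := integrableOn_rpow_mul_exp_neg_mul_rpow (p := 1) hc one_pos hb
  simpa [Real.rpow_one, neg_mul] using h

lemma inner_u {t : ℝ} (ht : 0 < t) :
    ∫ u in Ioi (0:ℝ), Real.sin u ^ 2 * Real.exp (-(t * u)) = 2 / (t * (t ^ 2 + 4)) := by
  set F : ℝ → ℝ := fun u =>
    Real.exp (-(t * u)) * (-(1 / (2 * t)) + (t * Real.cos (2 * u) - 2 * Real.sin (2 * u)) / (2 * (t ^ 2 + 4))) with hF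
  have hderiv : ∀ u ∈ Ioi (0:ℝ), HasDerivAt F (Real.sin u ^ 2 * Real.exp (-(t * u))) u := by
    intro u _
    have he : HasDerivAt (fun u : ℝ => Real.exp (-(t * u))) (-t * Real.exp (-(t * u))) u := by
      have h1 : HasDerivAt (fun u : ℝ => -(t * u)) (-t) u := by
        simpa using ((hasDerivAt_id u).const_mul (-t))
      exact ((Real.hasDerivAt_exp (-(t * u))).comp u h1).congr_deriv (by ring : rexp (-(t * u)) * -t = -t * rexp (-(t * u)))
    have h2u : HasDerivAt (fun u : ℝ => 2 * u) 2 u := by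
      simpa using (hasDerivAt_id u).const_mul 2
    have hcos : HasDerivAt (fun u : ℝ => Real.cos (2 * u)) (-Real.sin (2 * u) * 2) u :=
      (Real.hasDerivAt_cos (2 * u)).comp u h2u
    have hsin : HasDerivAt (fun u : ℝ => Real.sin (2 * u)) (Real.cos (2 * u) * 2) u :=
      (Real.hasDerivAt_sin (2 * u)).comp u h2u
    have hG : HasDerivAt (fun u : ℝ =>
        -(1 / (2 * t)) + (t * Real.cos (2 * u) - 2 * Real.sin (2 * u)) / (2 * (t ^ 2 + 4)))
        ((t * (-Real.sin (2 * u) * 2) - 2 * (Real.cos (2 * u) * 2)) / (2 * (t ^ 2 + 4))) u := by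
      exact (((hcos.const_mul t).sub (hsin.const_mul 2)).div_const _).const_add _
    have := he.mul hG
    refine this.congr_deriv ?_
    have hsq : Real.cos (2 * u) = 1 - 2 * Real.sin u ^ 2 := by
      rw [Real.cos_two_mul']
      ring_nf
      rw [Real.sin_sq u]
      ring
    have h4 : t ^ 2 + 4 ≠ 0 := by positivity
    field_simp
    rw [mul_comm u 2, hsq]
    ring
  have hcont : ContinuousWithinAt F (Ici 0) 0 := by
    apply Continuous.continuousWithinAt
    fun_prop
  have htend : Filter.Tendsto F Filter.atTop (nhds 0) := by
    have hb : ∀ u : ℝ, ‖F u‖ ≤ (1 / (2 * t) + (t + 2) / (2 * (t ^ 2 + 4))) * Real.exp (-(t * u)) := by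
      intro u
      rw [hF]
      rw [norm_mul, Real.norm_eq_abs, Real.norm_eq_abs, Real.abs_exp, mul_comm]
      gcongr
      have h2 : |t * Real.cos (2 * u) - 2 * Real.sin (2 * u)| ≤ t + 2 := by
        rw [abs_le]
        constructor <;>
          nlinarith [Real.neg_one_le_cos (2 * u), Real.cos_le_one (2 * u),
            Real.neg_one_le_sin (2 * u), Real.sin_le_one (2 * u), ht.le]
      refine (abs_add_le _ _).trans ?_
      rw [abs_neg, abs_of_pos (by positivity : (0:ℝ) < 1 / (2 * t)), abs_div,
        abs_of_pos (by positivity : (0:ℝ) < 2 * (t ^ 2 + 4))]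
      gcongr
    have harg : Filter.Tendsto (fun u : ℝ => -(t * u)) Filter.atTop Filter.atBot := by
      apply Filter.tendsto_neg_atTop_atBot.comp
      exact Filter.Tendsto.const_mul_atTop ht Filter.tendsto_id
    have h0 : Filter.Tendsto (fun u : ℝ => (1 / (2 * t) + (t + 2) / (2 * (t ^ 2 + 4))) * Real.exp (-(t * u))) Filter.atTop (nhds 0) := by
      rw [show (0:ℝ) = (1 / (2 * t) + (t + 2) / (2 * (t ^ 2 + 4))) * 0 by ring]
      exact (Real.tendsto_exp_atBot.comp harg).const_mul _
    exact squeeze_zero_norm hb h0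
  have hint : IntegrableOn (fun u : ℝ => Real.sin u ^ 2 * Real.exp (-(t * u))) (Ioi 0) := by
    apply Integrable.mono' ((exp_neg_integrableOn_Ioi 0 ht).congr_fun (fun x _ => (by simp only [neg_mul] : rexp (-t * x) = rexp (-(t * x)))) measurableSet_Ioi)
    · apply Continuous.aestronglyMeasurable
      fun_prop
    · filter_upwards with u
      rw [norm_mul, Real.norm_eq_abs, Real.norm_eq_abs, Real.abs_exp]
      nth_rewrite 2 [← one_mul (Real.exp _)]
      gcongr
      rw [abs_pow, sq_abs]
      nlinarith [Real.neg_one_le_sin u, Real.sin_le_one u]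
  have := MeasureTheory.integral_Ioi_of_hasDerivAt_of_tendsto hcont hderiv hint htend
  rw [this, hF]
  simp only [mul_zero, neg_zero, Real.exp_zero, Real.cos_zero, Real.sin_zero]
  have h4 : t ^ 2 + 4 ≠ 0 := by positivity
  field_simp
  ring

lemma gauss_moment {c v : ℝ} (hc : 0 < c) (hv : 0 < v) :
    ∫ t in Ioi (0:ℝ), t ^ (c - 1) * Real.exp (-(v * t ^ 2)) =
      (1 / v) ^ (c / 2) * Real.Gamma (c / 2) / 2 := by
  have key := integral_comp_rpow_Ioi (fun y => y ^ (c / 2 - 1) * Real.exp (-(v * y)))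
    (p := 2) two_ne_zero
  have heq : ∀ x ∈ Ioi (0:ℝ),
      (|2| * x ^ ((2:ℝ) - 1)) • ((x ^ (2:ℝ)) ^ (c / 2 - 1) * Real.exp (-(v * x ^ (2:ℝ))))
        = 2 * (x ^ (c - 1) * Real.exp (-(v * x ^ 2))) := by
    intro x hx
    have hx0 : (0:ℝ) < x := hx
    rw [smul_eq_mul, ← Real.rpow_natCast x 2]
    push_cast
    rw [← Real.rpow_mul hx0.le]
    rw [show (|2| : ℝ) = 2 by norm_num]
    rw [show ((2:ℝ) - 1) = 1 by norm_num, Real.rpow_one]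
    rw [show (2:ℝ) * (c / 2 - 1) = c - 2 by ring]
    rw [show (2:ℝ) * x * (x ^ (c - 2) * Real.exp (-(v * x ^ (2:ℝ)))) =
      2 * ((x * x ^ (c-2)) * Real.exp (-(v * x ^ (2:ℝ)))) by ring]
    congr 2
    rw [show x * x ^ (c - 2) = x ^ (1:ℝ) * x ^ (c - 2) by rw [Real.rpow_one],
      ← Real.rpow_add hx0, show (1:ℝ) + (c - 2) = c - 1 by ring]
  rw [setIntegral_congr_fun measurableSet_Ioi heq] at key
  rw [Real.integral_rpow_mul_exp_neg_mul_Ioi (by linarith : (0:ℝ) < c / 2) hv] at key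
  rw [integral_const_mul] at key
  linarith [key]

lemma int_rpow_inv_sq {s : ℝ} (hs0 : 0 < s) (hs1 : s < 1) :
    IntegrableOn (fun t : ℝ => t ^ (s - 1) * (1 / (t ^ 2 + 4))) (Ioi 0) := by
  have hmeas : AEStronglyMeasurable (fun t : ℝ => t ^ (s - 1) * (1 / (t ^ 2 + 4))) volume := by
    apply Measurable.aestronglyMeasurable
    fun_prop
  have h1 : IntegrableOn (fun t : ℝ => t ^ (s - 1) * (1 / (t ^ 2 + 4))) (Ioc 0 1) := by
    apply Integrable.mono' (((intervalIntegral.intervalIntegrable_rpow' (by linarith : (-1:ℝ) < s - 1)).1).mul_const (1/4))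
    · exact hmeas.restrict
    · filter_upwards [ae_restrict_mem measurableSet_Ioc] with t ht
      rw [Real.norm_eq_abs, abs_mul, abs_of_nonneg (Real.rpow_nonneg ht.1.le _),
        abs_of_pos (by positivity : (0:ℝ) < 1 / (t ^ 2 + 4))]
      apply mul_le_mul_of_nonneg_left _ (Real.rpow_nonneg ht.1.le _)
      rw [div_le_div_iff₀ (by positivity) (by norm_num)]
      nlinarith [sq_nonneg t]
  have h2 : IntegrableOn (fun t : ℝ => t ^ (s - 1) * (1 / (t ^ 2 + 4))) (Ioi 1) := by
    apply Integrable.mono' (integrableOn_Ioi_rpow_of_lt (by linarith : s - 3 < -1) one_pos)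
    · exact hmeas.restrict
    · filter_upwards [ae_restrict_mem measurableSet_Ioi] with t ht
      have ht0 : (0:ℝ) < t := lt_trans one_pos ht
      rw [Real.norm_eq_abs, abs_mul, abs_of_nonneg (Real.rpow_nonneg ht0.le _),
        abs_of_pos (by positivity : (0:ℝ) < 1 / (t ^ 2 + 4))]
      have : t ^ (s - 3) = t ^ (s - 1) * (1 / t ^ 2) := by
        rw [show s - 3 = (s - 1) + (-2) by ring, Real.rpow_add ht0]
        congr 1
        rw [show (-2:ℝ) = -(2:ℕ) by norm_num, Real.rpow_neg ht0.le, Real.rpow_natCast, one_div]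
      rw [this]
      apply mul_le_mul_of_nonneg_left _ (Real.rpow_nonneg ht0.le _)
      rw [div_le_div_iff₀ (by positivity) (by positivity)]
      nlinarith [sq_nonneg t]
  have := h1.union h2
  rwa [Ioc_union_Ioi_eq_Ioi (by norm_num : (0:ℝ) ≤ 1)] at this

set_option maxHeartbeats 2000000 in
lemma J_val {s : ℝ} (hs0 : 0 < s) (hs1 : s < 1) :
    ∫ t in Ioi (0:ℝ), t ^ (s - 1) * (1 / (t ^ 2 + 4)) =
      (1 / 4) ^ (1 - s / 2) * (Real.Gamma (s / 2) * Real.Gamma (1 - s / 2)) / 2 := by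
  have hmeas : AEStronglyMeasurable
      (Function.uncurry (fun t v : ℝ => t ^ (s - 1) * Real.exp (-((t ^ 2 + 4) * v))))
      ((volume.restrict (Ioi (0:ℝ))).prod (volume.restrict (Ioi (0:ℝ)))) := by
    apply Measurable.aestronglyMeasurable
    fun_prop
  have hInt : Integrable
      (Function.uncurry (fun t v : ℝ => t ^ (s - 1) * Real.exp (-((t ^ 2 + 4) * v))))
      ((volume.restrict (Ioi (0:ℝ))).prod (volume.restrict (Ioi (0:ℝ)))) := by
    rw [integrable_prod_iff hmeas]
    constructor
    · filter_upwards [ae_restrict_mem measurableSet_Ioi] with t _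
      simp only [Function.uncurry_apply_pair]
      have hc : (0:ℝ) < t ^ 2 + 4 := by positivity
      exact ((exp_neg_integrableOn_Ioi 0 hc).congr_fun
        (fun v _ => by rw [neg_mul]) measurableSet_Ioi).const_mul _
    · apply Integrable.congr (int_rpow_inv_sq hs0 hs1)
      filter_upwards [ae_restrict_mem measurableSet_Ioi] with t ht
      have ht0 : (0:ℝ) < t := ht
      have hc : (0:ℝ) < t ^ 2 + 4 := by positivity
      have hnorm : ∀ v : ℝ, ‖t ^ (s - 1) * Real.exp (-((t ^ 2 + 4) * v))‖
          = t ^ (s - 1) * Real.exp (-((t ^ 2 + 4) * v)) := by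
        intro v
        rw [Real.norm_eq_abs, abs_of_nonneg (by positivity)]
      simp only [Function.uncurry_apply_pair, hnorm]
      rw [integral_const_mul, aux_exp_int hc]
  have swap := integral_integral_swap hInt
  calc ∫ t in Ioi (0:ℝ), t ^ (s - 1) * (1 / (t ^ 2 + 4))
      = ∫ t in Ioi (0:ℝ), ∫ v in Ioi (0:ℝ), t ^ (s - 1) * Real.exp (-((t ^ 2 + 4) * v)) := by
        refine setIntegral_congr_fun measurableSet_Ioi (fun t ht => ?_)
        have hc : (0:ℝ) < t ^ 2 + 4 := by positivity
        rw [integral_const_mul, aux_exp_int hc]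
    _ = ∫ v in Ioi (0:ℝ), ∫ t in Ioi (0:ℝ), t ^ (s - 1) * Real.exp (-((t ^ 2 + 4) * v)) := swap
    _ = ∫ v in Ioi (0:ℝ), (Real.Gamma (s / 2) / 2) * (v ^ ((1 - s / 2) - 1) * Real.exp (-(4 * v))) := by
        refine setIntegral_congr_fun measurableSet_Ioi (fun v hv => ?_)
        have hv0 : (0:ℝ) < v := hv
        have hsplit : ∀ t : ℝ, t ^ (s - 1) * Real.exp (-((t ^ 2 + 4) * v))
            = Real.exp (-(4 * v)) * (t ^ (s - 1) * Real.exp (-(v * t ^ 2))) := by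
          intro t
          rw [show -((t ^ 2 + 4) * v) = -(v * t ^ 2) + -(4 * v) by ring, Real.exp_add]
          ring
        simp only [hsplit]
        rw [integral_const_mul, gauss_moment hs0 hv0]
        have hrv : (1 / v) ^ (s / 2) = v ^ ((1 - s / 2) - 1) := by
          rw [one_div, Real.inv_rpow hv0.le, ← Real.rpow_neg hv0.le]
          congr 1
          ring
        rw [hrv]
        ring
    _ = (Real.Gamma (s / 2) / 2) * ((1 / 4) ^ (1 - s / 2) * Real.Gamma (1 - s / 2)) := by
        rw [integral_const_mul,
          Real.integral_rpow_mul_exp_neg_mul_Ioi (by linarith : (0:ℝ) < 1 - s / 2) (by norm_num : (0:ℝ) < 4)]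
    _ = (1 / 4) ^ (1 - s / 2) * (Real.Gamma (s / 2) * Real.Gamma (1 - s / 2)) / 2 := by ring

lemma intKey {s : ℝ} (hs0 : 0 < s) (hs1 : s < 1) :
    IntegrableOn (fun u : ℝ => Real.sin u ^ 2 * u ^ (-s - 1)) (Ioi 0) := by
  have hmeas : AEStronglyMeasurable (fun u : ℝ => Real.sin u ^ 2 * u ^ (-s - 1)) volume := by
    apply Measurable.aestronglyMeasurable
    fun_prop
  have h1 : IntegrableOn (fun u : ℝ => Real.sin u ^ 2 * u ^ (-s - 1)) (Ioc 0 1) := by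
    apply Integrable.mono'
      ((intervalIntegral.intervalIntegrable_rpow' (by linarith : (-1:ℝ) < 1 - s)).1)
    · exact hmeas.restrict
    · filter_upwards [ae_restrict_mem measurableSet_Ioc] with u hu
      have hu0 : (0:ℝ) < u := hu.1
      rw [Real.norm_eq_abs, abs_mul, abs_of_nonneg (by positivity : (0:ℝ) ≤ Real.sin u ^ 2),
        abs_of_nonneg (Real.rpow_nonneg hu0.le _)]
      calc Real.sin u ^ 2 * u ^ (-s - 1) ≤ u ^ 2 * u ^ (-s - 1) :=
            mul_le_mul_of_nonneg_right Real.sin_sq_le_sq (Real.rpow_nonneg hu0.le _)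
        _ = u ^ (1 - s) := by
            rw [← Real.rpow_natCast u 2, ← Real.rpow_add hu0]
            congr 1
            push_cast
            ring
  have h2 : IntegrableOn (fun u : ℝ => Real.sin u ^ 2 * u ^ (-s - 1)) (Ioi 1) := by
    apply Integrable.mono' (integrableOn_Ioi_rpow_of_lt (by linarith : -s - 1 < -1) one_pos)
    · exact hmeas.restrict
    · filter_upwards [ae_restrict_mem measurableSet_Ioi] with u hu
      have hu0 : (0:ℝ) < u := lt_trans one_pos hu
      rw [Real.norm_eq_abs, abs_mul, abs_of_nonneg (by positivity : (0:ℝ) ≤ Real.sin u ^ 2),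
        abs_of_nonneg (Real.rpow_nonneg hu0.le _)]
      nth_rewrite 2 [← one_mul (u ^ (-s - 1))]
      apply mul_le_mul_of_nonneg_right _ (Real.rpow_nonneg hu0.le _)
      nlinarith [Real.neg_one_le_sin u, Real.sin_le_one u]
  have := h1.union h2
  rwa [Ioc_union_Ioi_eq_Ioi (by norm_num : (0:ℝ) ≤ 1)] at this

set_option maxHeartbeats 2000000 in
lemma key_integral {s : ℝ} (hs0 : 0 < s) (hs1 : s < 1) :
    ∫ u in Ioi (0:ℝ), u ^ (-s - 1) * Real.sin u ^ 2 =
      (Real.Gamma (s + 1))⁻¹ * ((1 / 4) ^ (1 - s / 2) * (Real.Gamma (s / 2) * Real.Gamma (1 - s / 2))) := by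
  have hGpos : 0 < Real.Gamma (s + 1) := Real.Gamma_pos_of_pos (by linarith)
  -- the double integrand
  have hmeas : AEStronglyMeasurable
      (Function.uncurry (fun u t : ℝ => Real.sin u ^ 2 * (t ^ s * Real.exp (-(u * t)))))
      ((volume.restrict (Ioi (0:ℝ))).prod (volume.restrict (Ioi (0:ℝ)))) := by
    apply Measurable.aestronglyMeasurable
    fun_prop
  -- inner t-integral for fixed u > 0
  have hinner_t : ∀ u : ℝ, 0 < u →
      ∫ t in Ioi (0:ℝ), Real.sin u ^ 2 * (t ^ s * Real.exp (-(u * t)))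
        = Real.sin u ^ 2 * (u ^ (-s - 1) * Real.Gamma (s + 1)) := by
    intro u hu
    rw [integral_const_mul]
    congr 1
    have h := Real.integral_rpow_mul_exp_neg_mul_Ioi (a := s + 1) (by linarith) hu
    rw [show s + 1 - 1 = s by ring] at h
    rw [h]
    congr 1
    rw [one_div, Real.inv_rpow hu.le, ← Real.rpow_neg hu.le]
    congr 1
    ring
  have hInt : Integrable
      (Function.uncurry (fun u t : ℝ => Real.sin u ^ 2 * (t ^ s * Real.exp (-(u * t)))))
      ((volume.restrict (Ioi (0:ℝ))).prod (volume.restrict (Ioi (0:ℝ)))) := by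
    rw [integrable_prod_iff hmeas]
    constructor
    · filter_upwards [ae_restrict_mem measurableSet_Ioi] with u hu
      simp only [Function.uncurry_apply_pair]
      exact (aux_int_rpow_exp (by linarith : (-1:ℝ) < s) hu).const_mul _
    · apply Integrable.congr ((intKey hs0 hs1).mul_const (Real.Gamma (s + 1)))
      filter_upwards [ae_restrict_mem measurableSet_Ioi] with u hu
      have hu0 : (0:ℝ) < u := hu
      simp only [Function.uncurry_apply_pair]
      have hnorm : ∀ t ∈ Ioi (0:ℝ), ‖Real.sin u ^ 2 * (t ^ s * Real.exp (-(u * t)))‖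
          = Real.sin u ^ 2 * (t ^ s * Real.exp (-(u * t))) := by
        intro t ht
        rw [Real.norm_eq_abs, abs_of_nonneg]
        exact mul_nonneg (by positivity)
          (mul_nonneg (Real.rpow_nonneg (le_of_lt ht) _) (Real.exp_pos _).le)
      rw [setIntegral_congr_fun measurableSet_Ioi hnorm, hinner_t u hu0]
      ring
  have swap := integral_integral_swap hInt
  calc ∫ u in Ioi (0:ℝ), u ^ (-s - 1) * Real.sin u ^ 2
      = ∫ u in Ioi (0:ℝ), (Real.Gamma (s + 1))⁻¹ *
          ∫ t in Ioi (0:ℝ), Real.sin u ^ 2 * (t ^ s * Real.exp (-(u * t))) := by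
        refine setIntegral_congr_fun measurableSet_Ioi (fun u hu => ?_)
        have hu0 : (0:ℝ) < u := hu
        rw [hinner_t u hu0]
        field_simp
    _ = (Real.Gamma (s + 1))⁻¹ *
          ∫ u in Ioi (0:ℝ), ∫ t in Ioi (0:ℝ), Real.sin u ^ 2 * (t ^ s * Real.exp (-(u * t))) := by
        rw [integral_const_mul]
    _ = (Real.Gamma (s + 1))⁻¹ *
          ∫ t in Ioi (0:ℝ), ∫ u in Ioi (0:ℝ), Real.sin u ^ 2 * (t ^ s * Real.exp (-(u * t))) := by
        rw [swap]
    _ = (Real.Gamma (s + 1))⁻¹ * ∫ t in Ioi (0:ℝ), 2 * (t ^ (s - 1) * (1 / (t ^ 2 + 4))) := by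
        congr 1
        refine setIntegral_congr_fun measurableSet_Ioi (fun t ht => ?_)
        have ht0 : (0:ℝ) < t := ht
        have : ∀ u : ℝ, Real.sin u ^ 2 * (t ^ s * Real.exp (-(u * t)))
            = t ^ s * (Real.sin u ^ 2 * Real.exp (-(t * u))) := by
          intro u; rw [mul_comm u t]; ring
        simp only [this]
        rw [integral_const_mul, inner_u ht0]
        rw [Real.rpow_sub ht0, Real.rpow_one]
        have h4 : t ^ 2 + 4 ≠ 0 := by positivity
        field_simp
    _ = (Real.Gamma (s + 1))⁻¹ * ((1 / 4) ^ (1 - s / 2) * (Real.Gamma (s / 2) * Real.Gamma (1 - s / 2))) := by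
        rw [integral_const_mul, J_val hs0 hs1]
        ring

set_option maxHeartbeats 1000000 in
lemma final_algebra {s : ℝ} (hs0 : 0 < s) (hs1 : s < 1) :
    (Real.Gamma (s + 1))⁻¹ * ((1 / 4) ^ (1 - s / 2) * (Real.Gamma (s / 2) * Real.Gamma (1 - s / 2))) =
      -(2 : ℝ) ^ (s - 1) * Real.cos (π * s / 2) * Real.Gamma (-s) := by
  have hGpos : 0 < Real.Gamma (s + 1) := Real.Gamma_pos_of_pos (by linarith)
  have h1 : Real.Gamma (s / 2) * Real.Gamma (1 - s / 2) = π / Real.sin (π * (s / 2)) :=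
    Real.Gamma_mul_Gamma_one_sub (s / 2)
  have h2 := Real.Gamma_mul_Gamma_one_sub (-s)
  rw [show (1:ℝ) - -s = s + 1 by ring, show π * -s = -(π * s) by ring, Real.sin_neg,
    div_neg] at h2
  have hsin1 : 0 < Real.sin (π * s) :=
    Real.sin_pos_of_pos_of_lt_pi (by positivity) (by nlinarith [Real.pi_pos])
  have hsin2 : 0 < Real.sin (π * (s / 2)) :=
    Real.sin_pos_of_pos_of_lt_pi (by positivity) (by nlinarith [Real.pi_pos])
  have hGneg : Real.Gamma (-s) = -(π / Real.sin (π * s)) / Real.Gamma (s + 1) := by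
    field_simp at h2 ⊢
    linarith [h2]
  have h2pow : (1 / 4 : ℝ) ^ (1 - s / 2) * 2 = (2:ℝ) ^ (s - 1) := by
    rw [show (1/4 : ℝ) = (2:ℝ) ^ (-2 : ℝ) by
        rw [show (-2 : ℝ) = ((-2 : ℤ) : ℝ) by norm_num, Real.rpow_intCast]; norm_num]
    rw [← Real.rpow_mul (by norm_num : (0:ℝ) ≤ 2)]
    have : (2:ℝ) ^ (s - 1) = (2:ℝ) ^ ((-2) * (1 - s / 2)) * (2:ℝ) ^ (1:ℝ) := by
      rw [← Real.rpow_add (by norm_num : (0:ℝ) < 2)]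
      congr 1
      ring
    rw [this, Real.rpow_one]
  have hsin12 : Real.sin (π * s) = 2 * Real.sin (π * (s / 2)) * Real.cos (π * (s / 2)) := by
    rw [show π * s = 2 * (π * (s / 2)) by ring, Real.sin_two_mul]
  rw [h1, hGneg, show π * s / 2 = π * (s / 2) by ring]
  have hsin2' : Real.sin (π * (s / 2)) ≠ 0 := hsin2.ne'
  have hval : Real.cos (π * (s / 2)) * (π / Real.sin (π * s)) = π / (2 * Real.sin (π * (s / 2))) := by
    have hcos : 0 < Real.cos (π * (s / 2)) := by
      apply Real.cos_pos_of_mem_Ioo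
      constructor <;> nlinarith [Real.pi_pos]
    rw [hsin12, ← div_div, mul_comm, div_mul_cancel₀ _ hcos.ne']
  have h2pow' : (1 / 4 : ℝ) ^ (1 - s / 2) = (2:ℝ) ^ (s - 1) / 2 := by linarith
  rw [show -(2:ℝ) ^ (s - 1) * Real.cos (π * (s / 2)) * (-(π / Real.sin (π * s)) / Real.Gamma (s + 1))
      = (2:ℝ) ^ (s - 1) * (Real.cos (π * (s / 2)) * (π / Real.sin (π * s))) / Real.Gamma (s + 1) by ring,
    hval, h2pow']
  field_simp

theorem sin_sq_integral (p : ℝ) (hp0 : 0 < p) (hp2 : p < 2) :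
    ∫ u in Set.Ioi (0 : ℝ), u ^ (-p / 2 - 1) * Real.sin u ^ 2 =
      -(2 : ℝ) ^ (p / 2 - 1) * Real.cos (π * p / 4) * Real.Gamma (-p / 2) := by
  have hs0 : 0 < p / 2 := by linarith
  have hs1 : p / 2 < 1 := by linarith
  calc ∫ u in Set.Ioi (0 : ℝ), u ^ (-p / 2 - 1) * Real.sin u ^ 2
      = ∫ u in Set.Ioi (0 : ℝ), u ^ (-(p / 2) - 1) * Real.sin u ^ 2 := by
        refine setIntegral_congr_fun measurableSet_Ioi (fun u _ => ?_)
        rw [show -p / 2 - 1 = -(p / 2) - 1 by ring]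
    _ = (Real.Gamma (p / 2 + 1))⁻¹ * ((1 / 4) ^ (1 - (p / 2) / 2) *
          (Real.Gamma ((p / 2) / 2) * Real.Gamma (1 - (p / 2) / 2))) := key_integral hs0 hs1
    _ = -(2 : ℝ) ^ (p / 2 - 1) * Real.cos (π * (p / 2) / 2) * Real.Gamma (-(p / 2)) :=
        final_algebra hs0 hs1
    _ = -(2 : ℝ) ^ (p / 2 - 1) * Real.cos (π * p / 4) * Real.Gamma (-p / 2) := by
        rw [show π * (p / 2) / 2 = π * p / 4 by ring, show -(p / 2) = -p / 2 by ring]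
end

section
/- Let Z₁, Z₂ be jointly Gaussian with mean zero, unit variances and correlation q ∈ (-1,1), and let 0 < p < 1. Then the function f_p(q) = E[(Z₁Z₂)^{⟨p⟩}] is strictly increasing in q on (-1,1). -/
set_option maxHeartbeats 1000000

open Real MeasureTheory

/-- Signed power `x^⟨p⟩ = |x|^p sgn(x)`. -/
noncomputable def signedPow (p x : ℝ) : ℝ := |x| ^ p * Real.sign x

/-- `f_p(q) = E[(Z₁Z₂)^⟨p⟩]` for `(Z₁,Z₂)` centered Gaussian with unit variances and
correlation `q`, written as an explicit two-dimensional Gaussian integral. -/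
noncomputable def fp (p q : ℝ) : ℝ :=
  (2 * π * Real.sqrt (1 - q ^ 2))⁻¹ *
    ∫ x : ℝ × ℝ, signedPow p (x.1 * x.2) *
      Real.exp (-(x.1 ^ 2 - 2 * q * x.1 * x.2 + x.2 ^ 2) / (2 * (1 - q ^ 2)))

/-- The integrand of `fp` after the decoupling change of variables. -/
noncomputable def gq (p q : ℝ) (y : ℝ × ℝ) : ℝ :=
  signedPow p (((1 + q) * y.1 ^ 2 - (1 - q) * y.2 ^ 2) / 2) *
    Real.exp (-(y.1 ^ 2 + y.2 ^ 2) / 2)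

lemma measurable_signedPow {p : ℝ} (hp : 0 ≤ p) : Measurable (signedPow p) := by
  unfold signedPow
  apply Measurable.mul
  · exact ((Real.continuous_rpow_const hp).comp continuous_abs).measurable
  · unfold Real.sign
    exact Measurable.ite measurableSet_Iio measurable_const
      (Measurable.ite measurableSet_Ioi measurable_const measurable_const)

lemma signedPow_strictMono {p : ℝ} (hp : 0 < p) : StrictMono (signedPow p) := by
  intro x y hxy
  unfold signedPow
  rcases lt_trichotomy x 0 with hx | hx | hx
  · rw [Real.sign_of_neg hx, abs_of_neg hx]
    rcases lt_trichotomy y 0 with hy | hy | hy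
    · rw [Real.sign_of_neg hy, abs_of_neg hy]
      have h := Real.rpow_lt_rpow (by linarith) (by linarith : -y < -x) hp
      nlinarith
    · subst hy; simp only [abs_zero, Real.sign_zero, mul_zero]
      have := Real.rpow_pos_of_pos (neg_pos.2 hx) p
      linarith
    · rw [Real.sign_of_pos hy, abs_of_pos hy]
      have h1 : 0 < (-x) ^ p := Real.rpow_pos_of_pos (by linarith) p
      have h2 : 0 < y ^ p := Real.rpow_pos_of_pos hy p
      nlinarith
  · subst hx
    rw [Real.sign_of_pos hxy, abs_of_pos hxy]
    simp only [abs_zero, Real.sign_zero, mul_zero, mul_one]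
    exact Real.rpow_pos_of_pos hxy p
  · rw [Real.sign_of_pos hx, Real.sign_of_pos (hx.trans hxy), abs_of_pos hx,
      abs_of_pos (hx.trans hxy), mul_one, mul_one]
    exact Real.rpow_lt_rpow hx.le hxy hp

lemma abs_signedPow_le (p x : ℝ) : |signedPow p x| ≤ |x| ^ p := by
  unfold signedPow
  have h1 : 0 ≤ |x| ^ p := Real.rpow_nonneg (abs_nonneg x) p
  have h2 : |Real.sign x| ≤ 1 := by
    unfold Real.sign; split_ifs <;> norm_num
  rw [abs_mul, abs_of_nonneg h1]
  nlinarith [abs_nonneg (Real.sign x)]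

/-- The decoupling change of variables: `fp p q = (2π)⁻¹ ∫ gq p q`. -/
lemma fp_eq (p : ℝ) (hp : 0 ≤ p) {q : ℝ} (hq : q ∈ Set.Ioo (-1 : ℝ) 1) :
    fp p q = (2 * π)⁻¹ * ∫ y : ℝ × ℝ, gq p q y := by
  obtain ⟨hq1, hq2⟩ := hq
  have h1q : (0 : ℝ) < 1 - q ^ 2 := by nlinarith
  set a := Real.sqrt ((1 + q) / 2) with ha_def
  set b := Real.sqrt ((1 - q) / 2) with hb_def
  have ha2 : a ^ 2 = (1 + q) / 2 := Real.sq_sqrt (by linarith)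
  have hb2 : b ^ 2 = (1 - q) / 2 := Real.sq_sqrt (by linarith)
  have ha : 0 < a := Real.sqrt_pos.2 (by linarith)
  have hb : 0 < b := Real.sqrt_pos.2 (by linarith)
  have hab : 2 * (a * b) = Real.sqrt (1 - q ^ 2) := by
    rw [ha_def, hb_def, ← Real.sqrt_mul (by linarith),
      show (1 + q) / 2 * ((1 - q) / 2) = (1 - q ^ 2) * (1 / 2) ^ 2 by ring,
      Real.sqrt_mul h1q.le, Real.sqrt_sq (by norm_num)]
    ring
  set L := Matrix.toLin (Module.Basis.finTwoProd ℝ) (Module.Basis.finTwoProd ℝ) !![a, b; a, -b] with hL_def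
  have hLapp : ∀ y : ℝ × ℝ, L y = (a * y.1 + b * y.2, a * y.1 - b * y.2) := by
    intro y
    rw [hL_def, Matrix.toLin_finTwoProd_apply]
    ring_nf
  have hdet : LinearMap.det L = -(2 * (a * b)) := by
    rw [hL_def, LinearMap.det_toLin, Matrix.det_fin_two_of]
    ring
  have hdetne : LinearMap.det L ≠ 0 := by
    rw [hdet]; nlinarith
  have habsdet : |LinearMap.det L| = Real.sqrt (1 - q ^ 2) := by
    rw [hdet, abs_neg, abs_of_pos (by positivity), hab]
  set F := fun x : ℝ × ℝ => signedPow p (x.1 * x.2) *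
      Real.exp (-(x.1 ^ 2 - 2 * q * x.1 * x.2 + x.2 ^ 2) / (2 * (1 - q ^ 2))) with hF_def
  have hcont : Continuous fun x : ℝ × ℝ =>
      Real.exp (-(x.1 ^ 2 - 2 * q * x.1 * x.2 + x.2 ^ 2) / (2 * (1 - q ^ 2))) := by
    fun_prop
  have hFm : Measurable F :=
    ((measurable_signedPow hp).comp (measurable_fst.mul measurable_snd)).mul hcont.measurable
  have hmap : Measure.map L volume =
      ENNReal.ofReal |(LinearMap.det L)⁻¹| • volume :=
    Measure.map_linearMap_addHaar_eq_smul_addHaar volume hdetne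
  have hcomp : ∫ y : ℝ × ℝ, F (L y) = |LinearMap.det L|⁻¹ * ∫ x : ℝ × ℝ, F x := by
    rw [← integral_map (L.continuous_of_finiteDimensional.measurable.aemeasurable)
      hFm.aestronglyMeasurable, hmap, integral_smul_measure,
      ENNReal.toReal_ofReal (abs_nonneg _), abs_inv, smul_eq_mul]
  have hchange : ∫ x : ℝ × ℝ, F x = |LinearMap.det L| * ∫ y : ℝ × ℝ, F (L y) := by
    rw [hcomp]
    field_simp
  have hpt : ∀ y : ℝ × ℝ, F (L y) = gq p q y := by
    intro ⟨s, t⟩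
    simp only [hF_def, hLapp]
    unfold gq
    dsimp only
    have e1 : (a * s + b * t) * (a * s - b * t) = ((1 + q) * s ^ 2 - (1 - q) * t ^ 2) / 2 := by
      linear_combination s ^ 2 * ha2 - t ^ 2 * hb2
    have e2 : (a * s + b * t) ^ 2 - 2 * q * (a * s + b * t) * (a * s - b * t)
        + (a * s - b * t) ^ 2 = (1 - q ^ 2) * (s ^ 2 + t ^ 2) := by
      linear_combination (2 - 2 * q) * s ^ 2 * ha2 + (2 + 2 * q) * t ^ 2 * hb2
    rw [e1, e2]
    congr 1
    field_simp
  rw [fp, hchange, habsdet]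
  simp only [hpt]
  have hsq : Real.sqrt (1 - q ^ 2) ≠ 0 := by positivity
  have hπ : (π : ℝ) ≠ 0 := Real.pi_ne_zero
  field_simp

lemma measurable_gq {p : ℝ} (q : ℝ) (hp : 0 ≤ p) : Measurable (gq p q) := by
  unfold gq
  have h1 : Measurable fun y : ℝ × ℝ => ((1 + q) * y.1 ^ 2 - (1 - q) * y.2 ^ 2) / 2 := by
    fun_prop
  have h2 : Continuous fun y : ℝ × ℝ => Real.exp (-(y.1 ^ 2 + y.2 ^ 2) / 2) := by fun_prop
  exact ((measurable_signedPow hp).comp h1).mul h2.measurable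

lemma integrable_gq {p q : ℝ} (hp0 : 0 < p) (hp1 : p ≤ 1) (hq1 : -1 ≤ q) (hq2 : q ≤ 1) :
    Integrable (gq p q) := by
  have hdom : Integrable (fun y : ℝ × ℝ =>
      4 * (Real.exp (-(1/4 : ℝ) * y.1 ^ 2) * Real.exp (-(1/4 : ℝ) * y.2 ^ 2))) :=
    ((integrable_exp_neg_mul_sq (by norm_num : (0:ℝ) < 1/4)).mul_prod
      (integrable_exp_neg_mul_sq (by norm_num : (0:ℝ) < 1/4))).const_mul 4
  apply hdom.mono' (measurable_gq q hp0.le).aestronglyMeasurable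
  filter_upwards with y
  set s := y.1
  set t := y.2
  set u := s ^ 2 + t ^ 2 with hu_def
  have hu0 : 0 ≤ u := by positivity
  set z := ((1 + q) * s ^ 2 - (1 - q) * t ^ 2) / 2 with hz_def
  have hz : |z| ≤ u := by
    rw [abs_le]
    constructor <;> nlinarith [sq_nonneg s, sq_nonneg t]
  have h1 : |signedPow p z| ≤ |z| ^ p := abs_signedPow_le p z
  have h2 : |z| ^ p ≤ u ^ p := Real.rpow_le_rpow (abs_nonneg z) hz hp0.le
  have h3 : u ^ p ≤ 1 + u := by
    rcases le_total u 1 with h | h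
    · have := Real.rpow_le_one hu0 h hp0.le
      linarith
    · have : u ^ p ≤ u ^ (1:ℝ) := Real.rpow_le_rpow_of_exponent_le h hp1
      rw [Real.rpow_one] at this
      linarith
  have h4 : 1 + u ≤ 4 * Real.exp (u/4) := by
    nlinarith [Real.add_one_le_exp (u/4)]
  show ‖signedPow p z * Real.exp (-u/2)‖ ≤ _
  rw [Real.norm_eq_abs, abs_mul, abs_of_pos (Real.exp_pos _)]
  calc |signedPow p z| * Real.exp (-u/2) ≤ (1 + u) * Real.exp (-u/2) := by
        apply mul_le_mul_of_nonneg_right _ (Real.exp_pos _).le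
        linarith
    _ ≤ (4 * Real.exp (u/4)) * Real.exp (-u/2) := by
        apply mul_le_mul_of_nonneg_right h4 (Real.exp_pos _).le
    _ = 4 * Real.exp (u/4 + -u/2) := by rw [Real.exp_add]; ring
    _ = 4 * (Real.exp (-(1/4:ℝ) * s ^ 2) * Real.exp (-(1/4:ℝ) * t ^ 2)) := by
        rw [← Real.exp_add]
        congr 1
        rw [hu_def]; ring

theorem fp_strictMonoOn (p : ℝ) (hp : p ∈ Set.Ioo (0 : ℝ) 1) :
    StrictMonoOn (fp p) (Set.Ioo (-1 : ℝ) 1) := by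
  obtain ⟨hp0, hp1⟩ := hp
  intro qa hqa qb hqb hlt
  rw [fp_eq p hp0.le hqa, fp_eq p hp0.le hqb]
  have h2π : (0 : ℝ) < (2 * π)⁻¹ := by
    have := Real.pi_pos
    positivity
  apply mul_lt_mul_of_pos_left _ h2π
  have hia : Integrable (gq p qa) := integrable_gq hp0 hp1.le hqa.1.le hqa.2.le
  have hib : Integrable (gq p qb) := integrable_gq hp0 hp1.le hqb.1.le hqb.2.le
  have hle : ∀ y : ℝ × ℝ, gq p qa y ≤ gq p qb y := by
    intro y
    unfold gq
    apply mul_le_mul_of_nonneg_right _ (Real.exp_pos _).le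
    apply (signedPow_strictMono hp0).monotone
    nlinarith [sq_nonneg y.1, sq_nonneg y.2, hlt.le]
  have hpos : ∀ y : ℝ × ℝ, y ≠ (0, 0) → 0 < gq p qb y - gq p qa y := by
    intro y hy
    have hne : y.1 ≠ 0 ∨ y.2 ≠ 0 := by
      by_contra hc
      push_neg at hc
      exact hy (Prod.ext_iff.mpr ⟨hc.1, hc.2⟩)
    have hu : 0 < y.1 ^ 2 + y.2 ^ 2 := by
      rcases hne with e | e
      · have := abs_pos.2 e; nlinarith [sq_nonneg y.2, sq_abs y.1]
      · have := abs_pos.2 e; nlinarith [sq_nonneg y.1, sq_abs y.2]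
    have harg : ((1 + qa) * y.1 ^ 2 - (1 - qa) * y.2 ^ 2) / 2
        < ((1 + qb) * y.1 ^ 2 - (1 - qb) * y.2 ^ 2) / 2 := by nlinarith
    have hstrict := signedPow_strictMono hp0 harg
    unfold gq
    have := Real.exp_pos (-(y.1 ^ 2 + y.2 ^ 2) / 2)
    nlinarith
  have hint : Integrable (fun y : ℝ × ℝ => gq p qb y - gq p qa y) := hib.sub hia
  have hnn : (0 : (ℝ × ℝ) → ℝ) ≤ fun y : ℝ × ℝ => gq p qb y - gq p qa y := by
    intro y
    have := hle y
    simp only [Pi.zero_apply]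
    linarith
  have hintpos : 0 < ∫ y : ℝ × ℝ, (gq p qb y - gq p qa y) := by
    rw [integral_pos_iff_support_of_nonneg hnn hint]
    have hsub : {y : ℝ × ℝ | y ≠ (0, 0)} ⊆ Function.support fun y => gq p qb y - gq p qa y := by
      intro y hy
      exact ne_of_gt (hpos y hy)
    calc (0 : ENNReal) < volume {y : ℝ × ℝ | y ≠ (0, 0)} := by
          refine IsOpen.measure_pos volume (isOpen_compl_singleton (x := ((0 : ℝ), (0 : ℝ)))) ?_
          exact ⟨(1, 0), by simp⟩
      _ ≤ volume (Function.support fun y => gq p qb y - gq p qa y) := measure_mono hsub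
  have heq : ∫ y : ℝ × ℝ, (gq p qb y - gq p qa y)
      = (∫ y : ℝ × ℝ, gq p qb y) - ∫ y : ℝ × ℝ, gq p qa y := integral_sub hib hia
  linarith
end
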